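/- Let H be the graph constructed from G and ℓ. For a vertex set R ⊆ V ∪ X ∪ Y, define proj⁻¹(R) = R ∪ { a_{v,j} ∈ A : v ∈ R ∩ V, 1 ≤ j ≤ d_v } ∪ { b_{v,j} ∈ B : v ∈ R ∩ V, 1 ≤ j ≤ d_v }. If proj⁻¹(R) is a target set for H, then R is a target set for H. -/

import Mathlib

namespace TSS

variable {V : Type*}

/-- The set of active vertices after `i` steps of the activation process started from `S`. -/
def activeAt (G : SimpleGraph V) (τ : V → ℕ) (S : Set V) : ℕ → Set V
  | 0 => S
  | i + 1 => activeAt G τ S i ∪ { v | τ v ≤ (G.neighborSet v ∩ activeAt G τ S i).ncard }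

/-- The active vertex set `𝒜(S) = ⋃ i, 𝒜ⁱ(S)`. -/
def activeSet (G : SimpleGraph V) (τ : V → ℕ) (S : Set V) : Set V :=
  ⋃ i, activeAt G τ S i

/-- `S` is a target set for `(G, τ)` if it activates every vertex. -/
def IsTargetSet (G : SimpleGraph V) (τ : V → ℕ) (S : Set V) : Prop :=
  activeSet G τ S = Set.univ

/-- Minimum size of a target set. -/
noncomputable def optTS (G : SimpleGraph V) (τ : V → ℕ) : ℕ :=
  sInf { m | ∃ S : Set V, IsTargetSet G τ S ∧ S.ncard = m }

/-- A reconfiguration sequence `Sfam 0 = X, …, Sfam T = Y` of target sets where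
consecutive sets differ in exactly one vertex. -/
structure IsReconfSeq (G : SimpleGraph V) (τ : V → ℕ) (X Y : Set V) (T : ℕ)
    (Sfam : ℕ → Set V) : Prop where
  head : Sfam 0 = X
  last : Sfam T = Y
  target : ∀ t ≤ T, IsTargetSet G τ (Sfam t)
  step : ∀ t < T, (symmDiff (Sfam t) (Sfam (t + 1))).ncard = 1

/-- The size of a reconfiguration sequence: maximum cardinality of any member. -/
noncomputable def seqSize (T : ℕ) (Sfam : ℕ → Set V) : ℕ :=
  (Finset.range (T + 1)).sup fun t => (Sfam t).ncard

/-- `opt_G(X ⇝ Y)`: minimum size over all reconfiguration sequences from `X` to `Y`. -/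
noncomputable def optReconf (G : SimpleGraph V) (τ : V → ℕ) (X Y : Set V) : ℕ :=
  sInf { m | ∃ T Sfam, IsReconfSeq G τ X Y T Sfam ∧ seqSize T Sfam = m }

/-- The four internal vertices of a one-way gadget. -/
inductive GadVert where | t | h | b1 | b2

/-- Index set of the one-way gadgets of the graph `H` built from `G` (with degree
function `d`) and `ℓ`. -/
inductive GadIdx (V : Type*) (ℓ : ℕ) (d : V → ℕ) where
  | vx (v : V) (i : Fin ℓ)
  | xa (i : Fin ℓ) (v : V) (j : Fin (d v))
  | av (v : V) (j : Fin (d v))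
  | vy (v : V) (i : Fin ℓ)
  | yb (i : Fin ℓ) (v : V) (j : Fin (d v))
  | bv (v : V) (j : Fin (d v))

/-- Vertices of the graph `H`: a copy of `V`, the sets `X`, `Y`, `A`, `B`, and the
internal vertices of all one-way gadgets. -/
inductive HVert (V : Type*) (ℓ : ℕ) (d : V → ℕ) where
  | orig (v : V)
  | xx (i : Fin ℓ)
  | yy (i : Fin ℓ)
  | aa (v : V) (j : Fin (d v))
  | bb (v : V) (j : Fin (d v))
  | gad (D : GadIdx V ℓ d) (w : GadVert)

variable {ℓ : ℕ} {d : V → ℕ}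

/-- The tail of a one-way gadget. -/
def gadTail : GadIdx V ℓ d → HVert V ℓ d
  | .vx v _ => .orig v
  | .xa i _ _ => .xx i
  | .av v j => .aa v j
  | .vy v _ => .orig v
  | .yb i _ _ => .yy i
  | .bv v j => .bb v j

/-- The head of a one-way gadget. -/
def gadHead : GadIdx V ℓ d → HVert V ℓ d
  | .vx _ i => .xx i
  | .xa _ v j => .aa v j
  | .av v _ => .orig v
  | .vy _ i => .yy i
  | .yb _ v j => .bb v j
  | .bv v _ => .orig v

/-- Base edge relation of the graph `H`. -/
def HRel (G : SimpleGraph V) (ℓ : ℕ) (d : V → ℕ) : HVert V ℓ d → HVert V ℓ d → Prop :=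
  fun p q =>
    (∃ u v, G.Adj u v ∧ p = .orig u ∧ q = .orig v) ∨
    (∃ D, p = .gad D .t ∧ (q = .gad D .b1 ∨ q = .gad D .b2)) ∨
    (∃ D, p = .gad D .h ∧ (q = .gad D .b1 ∨ q = .gad D .b2)) ∨
    (∃ D, p = gadTail D ∧ q = .gad D .t) ∨
    (∃ D, p = gadHead D ∧ q = .gad D .h)

/-- The graph `H` constructed from `G` (with degree function `d`) and `ℓ`. -/
def graphH (G : SimpleGraph V) (ℓ : ℕ) (d : V → ℕ) : SimpleGraph (HVert V ℓ d) :=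
  SimpleGraph.fromRel (HRel G ℓ d)

/-- The threshold function `τ'` of `H`, where `n` is the number of vertices of `G`. -/
def tauH (τ : V → ℕ) (n ℓ : ℕ) (d : V → ℕ) : HVert V ℓ d → ℕ
  | .orig v => τ v
  | .xx _ => n
  | .yy _ => n
  | .aa _ _ => ℓ
  | .bb _ _ => ℓ
  | .gad _ .t => 1
  | .gad _ .b1 => 1
  | .gad _ .b2 => 1
  | .gad _ .h => 2

/-- The vertex set `X = {x₁, …, x_ℓ}` of `H`. -/
def XSet (V : Type*) (ℓ : ℕ) (d : V → ℕ) : Set (HVert V ℓ d) := Set.range HVert.xx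

/-- The vertex set `Y = {y₁, …, y_ℓ}` of `H`. -/
def YSet (V : Type*) (ℓ : ℕ) (d : V → ℕ) : Set (HVert V ℓ d) := Set.range HVert.yy

/-- The copy of `V` inside `V(H)`. -/
def OrigSet (V : Type*) (ℓ : ℕ) (d : V → ℕ) : Set (HVert V ℓ d) := Set.range HVert.orig

/-- The vertex set `A = {a_{v,j}}` of `H`. -/
def ASet (V : Type*) (ℓ : ℕ) (d : V → ℕ) : Set (HVert V ℓ d) :=
  { p | ∃ v j, p = HVert.aa v j }

/-- The vertex set `B = {b_{v,j}}` of `H`. -/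
def BSet (V : Type*) (ℓ : ℕ) (d : V → ℕ) : Set (HVert V ℓ d) :=
  { p | ∃ v j, p = HVert.bb v j }

end TSS

namespace TSS

/-- `proj⁻¹(R)`: add to `R` all vertices `a_{v,j}` and `b_{v,j}` for `v ∈ R ∩ V`. -/
def projInv {V : Type*} (ℓ : ℕ) (d : V → ℕ) (R : Set (HVert V ℓ d)) : Set (HVert V ℓ d) :=
  R ∪ { p | ∃ v j, HVert.orig v ∈ R ∧ p = HVert.aa v j } ∪
    { p | ∃ v j, HVert.orig v ∈ R ∧ p = HVert.bb v j }

end TSS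

/-!
Let `E = extraSet R` consist of the vertices `a_{v,j}`, `b_{v,j}` with `v ∈ R` together with the
internal vertices of the gadgets leaving them. Then `𝒜(R) ∪ E` is closed under the activation rule:
a vertex outside `E` with a neighbour in `E` is either in `R` or the vertex `h` of a gadget
`x_i → a_{v,j}` or `y_i → b_{v,j}`; such an `h` (threshold 2) needs one of its `b`-vertices, which
lies outside `E`, and an active `b`-vertex of a gadget always makes its `h` active. Hence
`𝒜(proj⁻¹ R) ⊆ 𝒜(R) ∪ E`, so `R` activates every vertex outside `E`. In particular it activates the
`ℓ` gadget heads next to each `a_{v,j}` (threshold `ℓ`) and each `b_{v,j}`, hence also the gadgets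
leaving them, i.e. all of `E`.
-/

namespace TSS

section Activation

variable {W : Type*} (G : SimpleGraph W) (τ : W → ℕ)

def IsActivationClosed (C : Set W) : Prop :=
  ∀ v, τ v ≤ (G.neighborSet v ∩ C).ncard → v ∈ C

variable {G τ} {S C : Set W}

lemma activeAt_mono : Monotone (activeAt G τ S) :=
  monotone_nat_of_le_succ fun _ => Set.subset_union_left

lemma subset_activeSet : S ⊆ activeSet G τ S :=
  Set.subset_iUnion (activeAt G τ S) 0

lemma isActivationClosed_activeSet : IsActivationClosed G τ (activeSet G τ S) := by
  intro v hv
  set T := G.neighborSet v ∩ activeSet G τ S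
  by_cases hT : T.Finite
  · obtain ⟨i, hi⟩ := activeAt_mono.directed_le.exists_mem_subset_of_finset_subset_biUnion
      (s := hT.toFinset) (by rw [hT.coe_toFinset]; exact Set.inter_subset_right)
    rw [hT.coe_toFinset] at hi
    have hTi : G.neighborSet v ∩ activeAt G τ S i = T :=
      (Set.inter_subset_inter_right _ (Set.subset_iUnion _ i)).antisymm
        (Set.subset_inter Set.inter_subset_left hi)
    refine Set.mem_iUnion.2 ⟨i + 1, Or.inr ?_⟩
    show τ v ≤ _
    rwa [hTi]
  · -- an infinite set has `ncard = 0`, so `v` has threshold `0`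
    have hv0 : τ v = 0 := by simpa [Set.Infinite.ncard hT] using hv
    exact Set.mem_iUnion.2 ⟨1, Or.inr (by simp [hv0])⟩

variable [Finite W]

lemma activeSet_subset_of_isActivationClosed (hSC : S ⊆ C) (hC : IsActivationClosed G τ C) :
    activeSet G τ S ⊆ C := by
  refine Set.iUnion_subset fun i => ?_
  induction i with
  | zero => exact hSC
  | succ i ih =>
    rintro v (hv | hv)
    · exact ih hv
    · exact hC v (hv.trans (Set.ncard_le_ncard (Set.inter_subset_inter_right _ ih)))

lemma mem_activeSet_of_le_ncard {v : W} {T : Set W}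
    (hT : T ⊆ G.neighborSet v ∩ activeSet G τ S) (hv : τ v ≤ T.ncard) :
    v ∈ activeSet G τ S :=
  isActivationClosed_activeSet v (hv.trans (Set.ncard_le_ncard hT))

lemma mem_activeSet_iff {v : W} :
    v ∈ activeSet G τ S ↔
      v ∈ S ∨ τ v ≤ (G.neighborSet v ∩ activeSet G τ S).ncard := by
  refine ⟨fun hv => ?_, fun hv => hv.elim (fun h => subset_activeSet h)
    (isActivationClosed_activeSet v)⟩
  obtain ⟨i, hi⟩ := Set.mem_iUnion.1 hv
  induction i with
  | zero => exact Or.inl hi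
  | succ i ih =>
    refine hi.elim ih fun hi => Or.inr (hi.trans (Set.ncard_le_ncard ?_))
    exact Set.inter_subset_inter_right _ (Set.subset_iUnion _ i)

end Activation

variable {V : Type*} {ℓ : ℕ} {d : V → ℕ}

instance : Fintype GadVert := derive_fintype% GadVert

instance [Fintype V] [DecidableEq V] : Fintype (GadIdx V ℓ d) := derive_fintype% (GadIdx V ℓ d)

instance [Fintype V] [DecidableEq V] : Fintype (HVert V ℓ d) := derive_fintype% (HVert V ℓ d)

instance [Finite V] : Finite (HVert V ℓ d) := by
  have := Fintype.ofFinite V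
  classical
  infer_instance

section Adjacency

variable (G : SimpleGraph V)

@[simp] lemma gadTail_ne_gad (D D' : GadIdx V ℓ d) (w : GadVert) : gadTail D ≠ .gad D' w := by
  cases D <;> simp [gadTail]

@[simp] lemma gadHead_ne_gad (D D' : GadIdx V ℓ d) (w : GadVert) : gadHead D ≠ .gad D' w := by
  cases D <;> simp [gadHead]

@[simp] lemma gad_ne_gadTail (D D' : GadIdx V ℓ d) (w : GadVert) : .gad D' w ≠ gadTail D :=
  (gadTail_ne_gad D D' w).symm

@[simp] lemma gad_ne_gadHead (D D' : GadIdx V ℓ d) (w : GadVert) : .gad D' w ≠ gadHead D :=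
  (gadHead_ne_gad D D' w).symm

lemma gadTail_eq_aa {D : GadIdx V ℓ d} {v : V} {j : Fin (d v)} :
    gadTail D = .aa v j ↔ D = .av v j := by
  cases D <;> simp [gadTail]

lemma gadHead_eq_aa {D : GadIdx V ℓ d} {v : V} {j : Fin (d v)} :
    gadHead D = .aa v j ↔ ∃ i, D = .xa i v j := by
  cases D <;> simp [gadHead]

lemma gadTail_eq_bb {D : GadIdx V ℓ d} {v : V} {j : Fin (d v)} :
    gadTail D = .bb v j ↔ D = .bv v j := by
  cases D <;> simp [gadTail]

lemma gadHead_eq_bb {D : GadIdx V ℓ d} {v : V} {j : Fin (d v)} :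
    gadHead D = .bb v j ↔ ∃ i, D = .yb i v j := by
  cases D <;> simp [gadHead]

lemma graphH_adj {p q : HVert V ℓ d} :
    (graphH G ℓ d).Adj p q ↔ p ≠ q ∧ (HRel G ℓ d p q ∨ HRel G ℓ d q p) :=
  SimpleGraph.fromRel_adj _ _ _

lemma neighborSet_gad_t (D : GadIdx V ℓ d) :
    (graphH G ℓ d).neighborSet (.gad D .t) = {.gad D .b1, .gad D .b2, gadTail D} := by
  ext p
  simp [graphH_adj, HRel]
  aesop

lemma neighborSet_gad_h (D : GadIdx V ℓ d) :
    (graphH G ℓ d).neighborSet (.gad D .h) = {.gad D .b1, .gad D .b2, gadHead D} := by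
  ext p
  simp [graphH_adj, HRel]
  aesop

lemma neighborSet_gad_b (D : GadIdx V ℓ d) {w : GadVert} (hw : w = .b1 ∨ w = .b2) :
    (graphH G ℓ d).neighborSet (.gad D w) = {.gad D .t, .gad D .h} := by
  ext p
  rcases hw with rfl | rfl <;> simp [graphH_adj, HRel] <;> aesop

lemma mem_neighborSet_gad {D : GadIdx V ℓ d} {w : GadVert} {p : HVert V ℓ d}
    (hp : p ∈ (graphH G ℓ d).neighborSet (.gad D w)) :
    (∃ w', p = .gad D w') ∨ p = gadTail D ∨ p = gadHead D := by
  cases w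
  · rw [neighborSet_gad_t] at hp
    rcases hp with rfl | rfl | rfl <;> simp
  · rw [neighborSet_gad_h] at hp
    rcases hp with rfl | rfl | rfl <;> simp
  all_goals
    rw [neighborSet_gad_b G D (by simp)] at hp
    rcases hp with rfl | rfl <;> simp

lemma neighborSet_aa (v : V) (j : Fin (d v)) :
    (graphH G ℓ d).neighborSet (.aa v j) =
      insert (.gad (.av v j) .t) (Set.range fun i => .gad (.xa i v j) .h) := by
  ext p
  simp [graphH_adj, HRel, eq_comm (a := HVert.aa v j), gadTail_eq_aa, gadHead_eq_aa]
  aesop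

lemma neighborSet_bb (v : V) (j : Fin (d v)) :
    (graphH G ℓ d).neighborSet (.bb v j) =
      insert (.gad (.bv v j) .t) (Set.range fun i => .gad (.yb i v j) .h) := by
  ext p
  simp [graphH_adj, HRel, eq_comm (a := HVert.bb v j), gadTail_eq_bb, gadHead_eq_bb]
  aesop

end Adjacency

section Gadget

variable [Finite V] {G : SimpleGraph V} {τ : V → ℕ} {n : ℕ} {S : Set (HVert V ℓ d)}
  {D : GadIdx V ℓ d}

local notation "𝒜" => activeSet (graphH G ℓ d) (tauH τ n ℓ d)

lemma gad_mem_activeSet_of_gad_t (ht : .gad D .t ∈ 𝒜 S) (w : GadVert) :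
    .gad D w ∈ 𝒜 S := by
  have hb : ∀ w, (w = .b1 ∨ w = .b2) → .gad D w ∈ 𝒜 S := by
    rintro w hw
    refine mem_activeSet_of_le_ncard (T := {.gad D .t}) ?_ ?_
    · simpa [neighborSet_gad_b G D hw] using ht
    · rcases hw with rfl | rfl <;> simp [tauH]
  cases w
  · exact ht
  · refine mem_activeSet_of_le_ncard (T := {.gad D .b1, .gad D .b2}) ?_ ?_
    · simp [neighborSet_gad_h, Set.insert_subset_iff, hb]
    · simp [tauH]
  · exact hb _ (Or.inl rfl)
  · exact hb _ (Or.inr rfl)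

lemma gad_mem_activeSet_of_gadTail (hD : gadTail D ∈ 𝒜 S) (w : GadVert) :
    .gad D w ∈ 𝒜 S := by
  refine gad_mem_activeSet_of_gad_t (mem_activeSet_of_le_ncard (T := {gadTail D}) ?_ ?_) w
  · simpa [neighborSet_gad_t] using hD
  · simp [tauH]

lemma gad_h_mem_activeSet_of_gad_b {w : GadVert} (hw : w = .b1 ∨ w = .b2)
    (hS : .gad D w ∉ S) (hb : .gad D w ∈ 𝒜 S) : .gad D .h ∈ 𝒜 S := by
  have hpos : 1 ≤ ((graphH G ℓ d).neighborSet (.gad D w) ∩ 𝒜 S).ncard := by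
    rcases hw with rfl | rfl <;> simpa [tauH, hS] using mem_activeSet_iff.1 hb
  obtain ⟨q, hqN, hq⟩ := Set.nonempty_of_ncard_ne_zero (Nat.one_le_iff_ne_zero.1 hpos)
  rw [neighborSet_gad_b G D hw] at hqN
  rcases hqN with rfl | rfl
  · exact gad_mem_activeSet_of_gad_t hq .h
  · exact hq

end Gadget

section ExtraSet

def extraSet (R : Set (HVert V ℓ d)) : Set (HVert V ℓ d) :=
  {p | ∃ v, .orig v ∈ R ∧ ∃ j, p = .aa v j ∨ p = .bb v j ∨
    (∃ w, p = .gad (.av v j) w) ∨ ∃ w, p = .gad (.bv v j) w}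

variable {G : SimpleGraph V} {R : Set (HVert V ℓ d)}

lemma projInv_subset_union_extraSet : projInv ℓ d R ⊆ R ∪ extraSet R := by
  rintro p ((hp | ⟨v, j, hv, rfl⟩) | ⟨v, j, hv, rfl⟩)
  · exact Or.inl hp
  · exact Or.inr ⟨v, hv, j, Or.inl rfl⟩
  · exact Or.inr ⟨v, hv, j, Or.inr (Or.inl rfl)⟩

lemma gad_mem_extraSet_congr {D : GadIdx V ℓ d} (w w' : GadVert) :
    HVert.gad D w ∈ extraSet R ↔ HVert.gad D w' ∈ extraSet R := by
  simp [extraSet]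

lemma adj_extraSet {p q : HVert V ℓ d} (hpq : (graphH G ℓ d).Adj p q) (hq : q ∈ extraSet R)
    (hp : p ∉ extraSet R) : p ∈ R ∨ ∃ D, p = .gad D .h := by
  rw [SimpleGraph.adj_comm, ← SimpleGraph.mem_neighborSet] at hpq
  obtain ⟨v, hv, j, rfl | rfl | ⟨w, rfl⟩ | ⟨w, rfl⟩⟩ := hq
  · rw [neighborSet_aa] at hpq
    rcases hpq with rfl | ⟨i, rfl⟩
    · exact absurd ⟨v, hv, j, by simp⟩ hp
    · exact Or.inr ⟨_, rfl⟩
  · rw [neighborSet_bb] at hpq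
    rcases hpq with rfl | ⟨i, rfl⟩
    · exact absurd ⟨v, hv, j, by simp⟩ hp
    · exact Or.inr ⟨_, rfl⟩
  all_goals
    rcases mem_neighborSet_gad G hpq with ⟨w', rfl⟩ | rfl | rfl
    · exact absurd ⟨v, hv, j, by simp⟩ hp
    · exact absurd ⟨v, hv, j, by simp [gadTail]⟩ hp
    · exact Or.inl hv

lemma exists_gad_b_mem_of_two_le_ncard {D : GadIdx V ℓ d} {C : Set (HVert V ℓ d)}
    (hD : 2 ≤ ((graphH G ℓ d).neighborSet (.gad D .h) ∩ C).ncard) :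
    ∃ w, (w = .b1 ∨ w = .b2) ∧ .gad D w ∈ C := by
  by_contra! hb
  have hsub : (graphH G ℓ d).neighborSet (.gad D .h) ∩ C ⊆ {gadHead D} := by
    rintro p ⟨hp, hpC⟩
    rw [neighborSet_gad_h] at hp
    rcases hp with rfl | rfl | rfl
    · exact absurd hpC (hb _ (Or.inl rfl))
    · exact absurd hpC (hb _ (Or.inr rfl))
    · rfl
  have := Set.ncard_le_ncard hsub
  simp only [Set.ncard_singleton] at this
  omega

variable [Finite V] {τ : V → ℕ} {n : ℕ}

local notation "𝒜" => activeSet (graphH G ℓ d) (tauH τ n ℓ d)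

lemma isActivationClosed_activeSet_union_extraSet (hR : ∀ D w, HVert.gad D w ∉ R) :
    IsActivationClosed (graphH G ℓ d) (tauH τ n ℓ d) (𝒜 R ∪ extraSet R) := by
  intro p hp
  by_cases hpE : p ∈ extraSet R
  · exact Or.inr hpE
  left
  by_cases hN : ∃ q ∈ (graphH G ℓ d).neighborSet p, q ∈ extraSet R
  · obtain ⟨q, hpq, hq⟩ := hN
    rcases adj_extraSet hpq hq hpE with hpR | ⟨D, rfl⟩
    · exact subset_activeSet hpR
    obtain ⟨w, hw, hwC⟩ := exists_gad_b_mem_of_two_le_ncard (C := 𝒜 R ∪ extraSet R) hp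
    have hwE : HVert.gad D w ∉ extraSet R := (gad_mem_extraSet_congr w .h).not.2 hpE
    exact gad_h_mem_activeSet_of_gad_b hw (hR D w) (hwC.resolve_right hwE)
  · push Not at hN
    refine isActivationClosed_activeSet p (hp.trans (Set.ncard_le_ncard ?_))
    exact fun q ⟨hq, hqC⟩ => ⟨hq, hqC.resolve_right (hN q hq)⟩

lemma extraSet_subset_activeSet (hout : ∀ p ∉ extraSet R, p ∈ 𝒜 R) : extraSet R ⊆ 𝒜 R := by
  have haa : ∀ v (j : Fin (d v)), HVert.aa v j ∈ 𝒜 R := fun v j =>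
    mem_activeSet_of_le_ncard (T := Set.range fun i => .gad (.xa i v j) .h)
      (by
        rw [neighborSet_aa]
        exact fun p ⟨i, hi⟩ => ⟨Or.inr ⟨i, hi⟩, hi ▸ hout _ (by simp [extraSet])⟩)
      (by rw [Set.ncard_range_of_injective fun _ _ h => by simpa using h]; simp [tauH])
  have hbb : ∀ v (j : Fin (d v)), HVert.bb v j ∈ 𝒜 R := fun v j =>
    mem_activeSet_of_le_ncard (T := Set.range fun i => .gad (.yb i v j) .h)
      (by
        rw [neighborSet_bb]
        exact fun p ⟨i, hi⟩ => ⟨Or.inr ⟨i, hi⟩, hi ▸ hout _ (by simp [extraSet])⟩)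
      (by rw [Set.ncard_range_of_injective fun _ _ h => by simpa using h]; simp [tauH])
  rintro p ⟨v, -, j, rfl | rfl | ⟨w, rfl⟩ | ⟨w, rfl⟩⟩
  · exact haa v j
  · exact hbb v j
  · exact gad_mem_activeSet_of_gadTail (haa v j) w
  · exact gad_mem_activeSet_of_gadTail (hbb v j) w

end ExtraSet

end TSS

open TSS in
theorem stmt12_general {V : Type*} [Fintype V] (G : SimpleGraph V) [DecidableRel G.Adj] (τ : V → ℕ)
    (ℓ : ℕ) (R : Set (HVert V ℓ (fun v => G.degree v)))
    (hsub : R ⊆ OrigSet V ℓ (fun v => G.degree v) ∪ XSet V ℓ (fun v => G.degree v) ∪ YSet V ℓ (fun v => G.degree v)) :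
    IsTargetSet (graphH G ℓ (fun v => G.degree v)) (tauH τ (Fintype.card V) ℓ (fun v => G.degree v))
        (projInv ℓ (fun v => G.degree v) R) →
      IsTargetSet (graphH G ℓ (fun v => G.degree v)) (tauH τ (Fintype.card V) ℓ (fun v => G.degree v)) R := by
  intro hproj
  have hR : ∀ D w, HVert.gad D w ∉ R := fun D w hDw => by
    rcases hsub hDw with (⟨_, h⟩ | ⟨_, h⟩) | ⟨_, h⟩ <;> cases h
  have hcover : Set.univ ⊆ activeSet _ _ R ∪ extraSet R := hproj ▸
    activeSet_subset_of_isActivationClosed (projInv_subset_union_extraSet.trans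
      (Set.union_subset_union_left _ subset_activeSet))
      (isActivationClosed_activeSet_union_extraSet hR)
  have hout : ∀ p ∉ extraSet R, p ∈ activeSet _ _ R := fun p hp =>
    (hcover (Set.mem_univ p)).resolve_right hp
  exact Set.eq_univ_of_univ_subset
    (hcover.trans (Set.union_subset subset_rfl (extraSet_subset_activeSet hout)))

open TSS in
/-- For `R ⊆ V ∪ X ∪ Y`, if `proj⁻¹(R)` is a target set for `H`, then so is `R`. -/
theorem stmt12 {V : Type*} [Fintype V] (G : SimpleGraph V) [DecidableRel G.Adj] (τ : V → ℕ)
    (ℓ : ℕ) (hℓ : 1 ≤ ℓ) (hiso : ∀ v : V, 0 < G.degree v) (hτ : ∀ v : V, τ v ≤ G.degree v)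
    (R : Set (HVert V ℓ (fun v => G.degree v)))
    (hsub : R ⊆ OrigSet V ℓ (fun v => G.degree v) ∪ XSet V ℓ (fun v => G.degree v) ∪ YSet V ℓ (fun v => G.degree v)) :
    IsTargetSet (graphH G ℓ (fun v => G.degree v)) (tauH τ (Fintype.card V) ℓ (fun v => G.degree v))
        (projInv ℓ (fun v => G.degree v) R) →
      IsTargetSet (graphH G ℓ (fun v => G.degree v)) (tauH τ (Fintype.card V) ℓ (fun v => G.degree v)) R :=
  stmt12_general G τ ℓ R hsub
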